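/- Let B ⊆ ω₁ × ω₁ with B ∉ 𝓘. For every A ∈ 𝓘 with A ⊆ B and all sets B₁, …, Bₙ ⊆ B with Bᵢ ∉ 𝓘 for each i, the set 𝓕_A(B₁, …, Bₙ) = {C ∈ 𝒳_B : C ∩ A = ∅ and C ∩ Bᵢ ≠ ∅ for all i ≤ n} is nonempty; consequently the family 𝓕 consisting of all sets 𝓕_A = {C ∈ 𝒳_B : C ∩ A = ∅} with A ∈ 𝓘, A ⊆ B, together with all sets 𝓕_A(B₁, …, Bₙ) as above, has the finite intersection property. -/

import Mathlib

open Cardinal Filter Topology Set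

noncomputable section
open Classical

/-- `ω₁`, the first uncountable ordinal, viewed as the linearly ordered type of
all countable ordinals. -/
abbrev Omega1 : Type 1 := ↥(Set.Iio (Cardinal.aleph 1).ord)

/-- The vertical section `A_α = {β : (α, β) ∈ A}`. -/
def vertSection (A : Set (Omega1 × Omega1)) (α : Omega1) : Set Omega1 :=
  {β | (α, β) ∈ A}

/-- The horizontal section `A^α = {γ : (γ, α) ∈ A}`. -/
def horSection (A : Set (Omega1 × Omega1)) (α : Omega1) : Set Omega1 :=
  {γ | (γ, α) ∈ A}

/-- Membership in the σ-ideal `𝓘`: for all but countably many `α ∈ ω₁` both the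
vertical and the horizontal section of `A` at `α` are countable. -/
def MemIdealI (A : Set (Omega1 × Omega1)) : Prop :=
  {α : Omega1 | ¬ ((vertSection A α).Countable ∧ (horSection A α).Countable)}.Countable

/-- `F` is a finite graph of a strictly decreasing partial function: `F` is finite,
contains no two pairs with the same first coordinate, and whenever
`(α,β), (α',β') ∈ F` with `α < α'` then `β > β'`. -/
def IsDecGraph {T : Type*} [LinearOrder T] (F : Set (T × T)) : Prop :=
  F.Finite ∧ (∀ p ∈ F, ∀ q ∈ F, p.1 = q.1 → p = q) ∧
    (∀ p ∈ F, ∀ q ∈ F, p.1 < q.1 → q.2 < p.2)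

/-- The characteristic function of a set, with values in `{0,1} = Bool`. -/
def chi {T : Type*} (A : Set T) : T → Bool := fun x => if x ∈ A then true else false

/-- The space `𝒳` (over a linear order `T`) of characteristic functions of finite
graphs of strictly decreasing partial functions on `T`, viewed as a subset of the
product space `{0,1}^(T × T)`; it carries the subspace topology. -/
def XSpace (T : Type*) [LinearOrder T] : Set ((T × T) → Bool) :=
  {f | ∃ F : Set (T × T), IsDecGraph F ∧ f = chi F}

/-- The space `𝒳_B = {A ∈ 𝒳 : A ⊆ B}`, as a subset of `{0,1}^(ω₁ × ω₁)`. -/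
def XSpaceIn (B : Set (Omega1 × Omega1)) : Set ((Omega1 × Omega1) → Bool) :=
  {f | ∃ F : Set (Omega1 × Omega1), IsDecGraph F ∧ F ⊆ B ∧ f = chi F}

/-- The support of a point of `{0,1}^T`: the set of which it is the
characteristic function. -/
def supp {T : Type*} (f : T → Bool) : Set T := {x | f x = true}

/-- The set `𝓕_A = {C ∈ 𝒳_B : C ∩ A = ∅}`. -/
def FA (B A : Set (Omega1 × Omega1)) : Set ↥(XSpaceIn B) :=
  {C | supp (C : (Omega1 × Omega1) → Bool) ∩ A = ∅}

/-- The set `𝓕_A(B₁, …, Bₙ) = {C ∈ 𝒳_B : C ∩ A = ∅ ∧ ∀ i ≤ n, C ∩ Bᵢ ≠ ∅}`. -/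
def FAmeets (B A : Set (Omega1 × Omega1)) {n : ℕ} (Bs : Fin n → Set (Omega1 × Omega1)) :
    Set ↥(XSpaceIn B) :=
  {C | supp (C : (Omega1 × Omega1) → Bool) ∩ A = ∅ ∧
    ∀ i, (supp (C : (Omega1 × Omega1) → Bool) ∩ Bs i).Nonempty}

/-- The family `𝓕` of all sets `𝓕_A` with `A ∈ 𝓘`, `A ⊆ B`, together with all sets
`𝓕_A(B₁, …, Bₙ)` with `A ∈ 𝓘`, `A ⊆ B` and `Bᵢ ⊆ B`, `Bᵢ ∉ 𝓘`. -/
def scrF (B : Set (Omega1 × Omega1)) : Set (Set ↥(XSpaceIn B)) :=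
  {S | ∃ A, MemIdealI A ∧ A ⊆ B ∧ S = FA B A} ∪
  {S | ∃ A, MemIdealI A ∧ A ⊆ B ∧ ∃ (n : ℕ) (Bs : Fin n → Set (Omega1 × Omega1)),
    (∀ i, Bs i ⊆ B ∧ ¬ MemIdealI (Bs i)) ∧ S = FAmeets B A Bs}

/-! A set outside `𝓘` has uncountably many uncountable vertical sections or uncountably many
uncountable horizontal ones, while a set in `𝓘` has only countably many of either; as bounded
subsets of `ω₁` are countable, points of `Bᵢ \ A` can be found beyond any given bounds. We choose
the points by recursion on `n`. In the vertical case the first coordinate `α` of the point of `B₁`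
is fixed first, the points for `B₂, …, Bₙ` are built to the right of `α`, and the second coordinate
is then taken in the section at `α` above all of them, so the new point lies at the upper left of
the chain; the horizontal case is symmetric and puts it at the lower right.
The finite intersection property follows because every member of `𝓕` has the form `𝓕_A(B̄)` and
`𝓕_A(B̄) ∩ 𝓕_{A'}(B̄') = 𝓕_{A ∪ A'}(B̄, B̄')`. -/

namespace IsDecGraph

variable {T : Type*} [LinearOrder T]

theorem empty : IsDecGraph (∅ : Set (T × T)) :=
  ⟨finite_empty, by simp, by simp⟩

theorem insert {F : Set (T × T)} {p : T × T} (hF : IsDecGraph F)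
    (hp : ∀ q ∈ F, p.1 < q.1 ∧ q.2 < p.2 ∨ q.1 < p.1 ∧ p.2 < q.2) :
    IsDecGraph (insert p F) := by
  obtain ⟨hfin, hinj, hdec⟩ := hF
  refine ⟨hfin.insert p, ?_, ?_⟩ <;> rintro a (rfl | ha) b (rfl | hb) hab
  all_goals grind

end IsDecGraph

structure IsDecTransversal {T ι : Type*} [LinearOrder T] (A : Set (T × T)) (Bs : ι → Set (T × T))
    (F : Set (T × T)) : Prop where
  isDecGraph : IsDecGraph F
  subset_iUnion : F ⊆ ⋃ i, Bs i
  disjoint : Disjoint F A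
  inter_nonempty : ∀ i, (F ∩ Bs i).Nonempty

theorem IsDecTransversal.cons {T : Type*} [LinearOrder T] {A F : Set (T × T)} {n : ℕ}
    {Bs : Fin (n + 1) → Set (T × T)} {p : T × T}
    (hF : IsDecTransversal A (fun i : Fin n => Bs i.succ) F) (hpB : p ∈ Bs 0) (hpA : p ∉ A)
    (hpF : ∀ q ∈ F, p.1 < q.1 ∧ q.2 < p.2 ∨ q.1 < p.1 ∧ p.2 < q.2) :
    IsDecTransversal A Bs (insert p F) := by
  obtain ⟨hdec, hsub, hdisj, hmeet⟩ := hF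
  refine ⟨hdec.insert hpF, insert_subset (mem_iUnion.2 ⟨0, hpB⟩) ?_,
    disjoint_insert_left.2 ⟨hpA, hdisj⟩, Fin.cases ⟨p, mem_insert p F, hpB⟩ fun i => ?_⟩
  · exact hsub.trans (iUnion_subset fun i => Set.subset_iUnion Bs i.succ)
  · exact (hmeet i).mono (inter_subset_inter_left _ (subset_insert p F))

instance : Nonempty Omega1 := ⟨⟨0, by simp [Ordinal.omega_pos]⟩⟩

namespace Omega1

theorem countable_Iic (x : Omega1) : (Iic x).Countable := by
  have hx : Order.succ (x : Ordinal) < (aleph 1).ord :=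
    (isSuccLimit_ord (aleph0_le_aleph 1)).succ_lt x.2
  have hI : (Iio (Order.succ (x : Ordinal))).Countable := by
    rw [← le_aleph0_iff_set_countable, mk_Iio_ordinal, lift_le_aleph0, ← lt_aleph_one_iff]
    exact lt_ord.mp hx
  refine (hI.preimage Subtype.val_injective).mono fun y (hy : y ≤ x) => ?_
  exact Order.lt_succ_of_le (Subtype.coe_le_coe.2 hy)

theorem exists_gt_mem_of_not_countable {S : Set Omega1} (hS : ¬ S.Countable) (x : Omega1) :
    ∃ y ∈ S, x < y := by
  by_contra! h
  exact hS ((countable_Iic x).mono h)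

theorem exists_gt_not_countable_diff {β : Type*} {X Y : Omega1 → Set β}
    (hX : ¬ {α | ¬ (X α).Countable}.Countable) (hY : {α | ¬ (Y α).Countable}.Countable)
    (x : Omega1) : ∃ α, x < α ∧ ¬ (X α \ Y α).Countable := by
  obtain ⟨α, ⟨hXα, hYα⟩, hα⟩ :=
    exists_gt_mem_of_not_countable (fun h => hX (h.of_sdiff hY)) x
  exact ⟨α, hα, fun h => hXα (h.of_sdiff (not_not.1 hYα))⟩

end Omega1

theorem memIdealI_empty : MemIdealI ∅ := by
  simp [MemIdealI, vertSection, horSection]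

theorem MemIdealI.union {A A' : Set (Omega1 × Omega1)} (hA : MemIdealI A) (hA' : MemIdealI A') :
    MemIdealI (A ∪ A') := by
  refine Set.Countable.mono (fun α hα => ?_) (Set.Countable.union hA hA')
  simp only [mem_union, mem_ofPred_eq] at hα ⊢
  by_contra! h
  exact hα ⟨h.1.1.union h.2.1, h.1.2.union h.2.2⟩

theorem MemIdealI.countable_setOf_not_countable_vertSection {A : Set (Omega1 × Omega1)}
    (hA : MemIdealI A) : {α | ¬ (vertSection A α).Countable}.Countable :=
  Set.Countable.mono (fun _ => mt And.left) hA

theorem MemIdealI.countable_setOf_not_countable_horSection {A : Set (Omega1 × Omega1)}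
    (hA : MemIdealI A) : {α | ¬ (horSection A α).Countable}.Countable :=
  Set.Countable.mono (fun _ => mt And.right) hA

theorem not_countable_vertSection_or_horSection {D : Set (Omega1 × Omega1)} (hD : ¬ MemIdealI D) :
    ¬ {α | ¬ (vertSection D α).Countable}.Countable ∨
      ¬ {α | ¬ (horSection D α).Countable}.Countable := by
  by_contra! h
  exact hD ((h.1.union h.2).mono fun α hα => not_and_or.1 hα)

theorem Set.Finite.exists_ge_forall_le {α β : Type*} [LinearOrder β] {F : Set α} (hF : F.Finite)
    (x : β) (f : α → β) : ∃ y, x ≤ y ∧ ∀ q ∈ F, f q ≤ y := by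
  have : Nonempty β := ⟨x⟩
  obtain ⟨y, hy⟩ := ((hF.image f).insert x).bddAbove
  exact ⟨y, hy (mem_insert x _), fun q hq => hy (mem_insert_of_mem x (mem_image_of_mem f hq))⟩

theorem exists_isDecTransversal {A : Set (Omega1 × Omega1)} (hA : MemIdealI A) :
    ∀ {n : ℕ} (Bs : Fin n → Set (Omega1 × Omega1)), (∀ i, ¬ MemIdealI (Bs i)) →
      ∀ a b : Omega1, ∃ F, IsDecTransversal A Bs F ∧ F ⊆ Ioi a ×ˢ Ioi b
  | 0, _, _, _, _ =>
    ⟨∅, ⟨IsDecGraph.empty, empty_subset _, empty_disjoint A, nofun⟩, empty_subset _⟩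
  | n + 1, Bs, hBs, a, b => by
    have ih := exists_isDecTransversal hA (fun i : Fin n => Bs i.succ) fun i => hBs i.succ
    rcases not_countable_vertSection_or_horSection (hBs 0) with hV | hH
    · obtain ⟨α, hαa, hα⟩ :=
        Omega1.exists_gt_not_countable_diff hV hA.countable_setOf_not_countable_vertSection a
      obtain ⟨F, hF, hFab⟩ := ih α b
      obtain ⟨b', hbb', hF'⟩ := hF.isDecGraph.1.exists_ge_forall_le b Prod.snd
      obtain ⟨β, ⟨hβB, hβA⟩, hβ⟩ := Omega1.exists_gt_mem_of_not_countable hα b'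
      refine ⟨insert (α, β) F, hF.cons hβB hβA fun q hq => ?_, insert_subset ?_ ?_⟩
      · exact Or.inl ⟨(hFab hq).1, (hF' q hq).trans_lt hβ⟩
      · exact ⟨hαa, hbb'.trans_lt hβ⟩
      · exact hFab.trans (prod_mono (Ioi_subset_Ioi hαa.le) le_rfl)
    · obtain ⟨β, hβb, hβ⟩ :=
        Omega1.exists_gt_not_countable_diff hH hA.countable_setOf_not_countable_horSection b
      obtain ⟨F, hF, hFab⟩ := ih a β
      obtain ⟨a', haa', hF'⟩ := hF.isDecGraph.1.exists_ge_forall_le a Prod.fst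
      obtain ⟨α, ⟨hαB, hαA⟩, hα⟩ := Omega1.exists_gt_mem_of_not_countable hβ a'
      refine ⟨insert (α, β) F, hF.cons hαB hαA fun q hq => ?_, insert_subset ?_ ?_⟩
      · exact Or.inr ⟨(hF' q hq).trans_lt hα, (hFab hq).2⟩
      · exact ⟨haa'.trans_lt hα, hβb⟩
      · exact hFab.trans (prod_mono le_rfl (Ioi_subset_Ioi hβb.le))

theorem supp_chi {T : Type*} (F : Set T) : supp (chi F) = F := by
  ext x
  by_cases hx : x ∈ F <;> simp [supp, chi, hx]

theorem FAmeets_nonempty {B A : Set (Omega1 × Omega1)} (hA : MemIdealI A) {n : ℕ}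
    {Bs : Fin n → Set (Omega1 × Omega1)} (hBs : ∀ i, Bs i ⊆ B ∧ ¬ MemIdealI (Bs i)) :
    (FAmeets B A Bs).Nonempty := by
  obtain ⟨F, ⟨hdec, hsub, hdisj, hmeet⟩, -⟩ :=
    exists_isDecTransversal hA Bs (fun i => (hBs i).2) (Classical.arbitrary _)
      (Classical.arbitrary _)
  have hFB : F ⊆ B := hsub.trans (iUnion_subset fun i => (hBs i).1)
  refine ⟨⟨chi F, F, hdec, hFB, rfl⟩, ?_, ?_⟩ <;> simp only [supp_chi]
  exacts [hdisj.inter_eq, hmeet]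

def FAmeetsFamily (B : Set (Omega1 × Omega1)) : Set (Set ↥(XSpaceIn B)) :=
  {S | ∃ A, MemIdealI A ∧ A ⊆ B ∧ ∃ (n : ℕ) (Bs : Fin n → Set (Omega1 × Omega1)),
    (∀ i, Bs i ⊆ B ∧ ¬ MemIdealI (Bs i)) ∧ S = FAmeets B A Bs}

theorem FA_eq_FAmeets_elim0 (B A : Set (Omega1 × Omega1)) : FA B A = FAmeets B A Fin.elim0 := by
  ext C
  simp [FA, FAmeets]

theorem FAmeets_inter_FAmeets (B A A' : Set (Omega1 × Omega1)) {n m : ℕ}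
    (Bs : Fin n → Set (Omega1 × Omega1)) (Bs' : Fin m → Set (Omega1 × Omega1)) :
    FAmeets B A Bs ∩ FAmeets B A' Bs' = FAmeets B (A ∪ A') (Fin.append Bs Bs') := by
  ext C
  simp only [FAmeets, mem_inter_iff, mem_ofPred_eq, inter_union_distrib_left, union_empty_iff,
    Fin.forall_fin_add, Fin.append_left, Fin.append_right]
  tauto

theorem scrF_subset_FAmeetsFamily (B : Set (Omega1 × Omega1)) : scrF B ⊆ FAmeetsFamily B := by
  rintro S (⟨A, hA, hAB, rfl⟩ | hS)
  exacts [⟨A, hA, hAB, 0, Fin.elim0, nofun, FA_eq_FAmeets_elim0 B A⟩, hS]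

theorem finiteInter_FAmeetsFamily (B : Set (Omega1 × Omega1)) : FiniteInter (FAmeetsFamily B) where
  univ_mem := ⟨∅, memIdealI_empty, empty_subset B, 0, Fin.elim0, nofun, by
    ext; simp [FAmeets]⟩
  inter_mem := by
    rintro _ ⟨A, hA, hAB, n, Bs, hBs, rfl⟩ _ ⟨A', hA', hA'B, m, Bs', hBs', rfl⟩
    refine ⟨A ∪ A', hA.union hA', union_subset hAB hA'B, n + m, Fin.append Bs Bs', ?_,
      FAmeets_inter_FAmeets B A A' Bs Bs'⟩
    simpa only [Fin.forall_fin_add, Fin.append_left, Fin.append_right] using ⟨hBs, hBs'⟩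

theorem FAmeets_nonempty_and_fip_general (B : Set (Omega1 × Omega1)) :
    (∀ A : Set (Omega1 × Omega1), MemIdealI A → A ⊆ B →
      ∀ (n : ℕ) (Bs : Fin n → Set (Omega1 × Omega1)),
        (∀ i, Bs i ⊆ B ∧ ¬ MemIdealI (Bs i)) → (FAmeets B A Bs).Nonempty) ∧
    (∀ T : Set (Set ↥(XSpaceIn B)), T ⊆ scrF B → T.Finite → (⋂₀ T).Nonempty) := by
  refine ⟨fun A hA _ n Bs hBs => FAmeets_nonempty hA hBs, fun T hTF hT => ?_⟩
  have hmem := (finiteInter_FAmeetsFamily B).finiteInter_mem hT.toFinset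
    (by simpa using hTF.trans (scrF_subset_FAmeetsFamily B))
  obtain ⟨A, hA, -, n, Bs, hBs, hTA⟩ := hT.coe_toFinset ▸ hmem
  exact hTA ▸ FAmeets_nonempty hA hBs

/-- Let `B ∉ 𝓘`. For every `A ∈ 𝓘` with `A ⊆ B` and all `B₁, …, Bₙ ⊆ B` not in `𝓘`,
the set `𝓕_A(B₁, …, Bₙ)` is nonempty; consequently the family `𝓕` has the finite
intersection property. -/
theorem FAmeets_nonempty_and_fip (B : Set (Omega1 × Omega1)) (hB : ¬ MemIdealI B) :
    (∀ A : Set (Omega1 × Omega1), MemIdealI A → A ⊆ B →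
      ∀ (n : ℕ) (Bs : Fin n → Set (Omega1 × Omega1)),
        (∀ i, Bs i ⊆ B ∧ ¬ MemIdealI (Bs i)) → (FAmeets B A Bs).Nonempty) ∧
    (∀ T : Set (Set ↥(XSpaceIn B)), T ⊆ scrF B → T.Finite → (⋂₀ T).Nonempty) :=
  FAmeets_nonempty_and_fip_general B

end
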